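/- Let f: ℝⁿ → ℝ be twice continuously differentiable and concave, and let B̄ be a symmetric negative definite matrix with B̄ ≤ ∇²f(β) (Loewner ordering) for all β. Then for all β, f(β - B̄⁻¹∇f(β)) ≥ f(β), with equality only if ∇f(β) = 0. -/

import Mathlib

/-!
Along the segment `t ↦ β + t • δ` the second derivative of `f` is at least `δ ⬝ᵥ B *ᵥ δ`, so
`f (β + δ) ≥ f β + ∇f(β) ⬝ᵥ δ + (δ ⬝ᵥ B *ᵥ δ) / 2`. The right-hand side is a concave quadratic in
`δ`, maximized at the Newton step `δ = -B⁻¹ ∇f(β)` with value `f β - (∇f(β) ⬝ᵥ B⁻¹ *ᵥ ∇f(β)) / 2`,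
and `B⁻¹` is negative definite along with `B`, so the gain is positive unless `∇f(β) = 0`.
-/

open Matrix

theorem le_add_deriv_mul_add_sq_of_le_deriv2 {ψ ψ' ψ'' : ℝ → ℝ} {c x y : ℝ}
    (hψ : ∀ t, HasDerivAt ψ (ψ' t) t) (hψ' : ∀ t, HasDerivAt ψ' (ψ'' t) t)
    (hc : ∀ t, c ≤ ψ'' t) (hxy : x < y) :
    ψ x + ψ' x * (y - x) + c * (y - x) ^ 2 / 2 ≤ ψ y := by
  have hφ : ∀ t, HasDerivAt (fun t => ψ t - c * t ^ 2 / 2) (ψ' t - c * t) t := fun t =>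
    ((hψ t).sub (((hasDerivAt_pow 2 t).const_mul c).div_const 2)).congr_deriv (by ring)
  have hφ' : ∀ t, HasDerivAt (fun t => ψ' t - c * t) (ψ'' t - c) t := fun t =>
    ((hψ' t).sub ((hasDerivAt_id' t).const_mul c)).congr_deriv (by ring)
  have hconvex : ConvexOn ℝ Set.univ fun t => ψ t - c * t ^ 2 / 2 :=
    convexOn_of_hasDerivWithinAt2_nonneg convex_univ
      (fun t _ => (hφ t).continuousAt.continuousWithinAt)
      (fun t _ => (hφ t).hasDerivWithinAt) (fun t _ => (hφ' t).hasDerivWithinAt)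
      (fun t _ => sub_nonneg.2 (hc t))
  have hslope := hconvex.le_slope_of_hasDerivAt (Set.mem_univ x) (Set.mem_univ y) hxy (hφ x)
  rw [slope_def_field, le_div_iff₀ (sub_pos.2 hxy)] at hslope
  nlinarith

theorem add_fderiv_add_half_le_of_le_fderiv_fderiv {E : Type*} [NormedAddCommGroup E]
    [NormedSpace ℝ E] {f : E → ℝ} (hf : ContDiff ℝ 2 f) {c : ℝ} (x v : E)
    (hc : ∀ y, c ≤ fderiv ℝ (fun z => fderiv ℝ f z v) y v) :
    f x + fderiv ℝ f x v + c / 2 ≤ f (x + v) := by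
  have hline : ∀ t : ℝ, HasDerivAt (fun t : ℝ => x + t • v) v t := fun t => by
    simpa using ((hasDerivAt_id t).smul_const v).const_add x
  have hf' : ContDiff ℝ 1 fun z => fderiv ℝ f z v :=
    (hf.fderiv_right one_add_one_eq_two.le).clm_apply contDiff_const
  have h := le_add_deriv_mul_add_sq_of_le_deriv2 (x := 0) (y := 1)
    (fun t => ((hf.differentiable two_ne_zero _).hasFDerivAt).comp_hasDerivAt t (hline t))
    (fun t => ((hf'.differentiable one_ne_zero _).hasFDerivAt).comp_hasDerivAt t (hline t))
    (fun t => hc _) zero_lt_one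
  simpa using h

theorem ContinuousLinearMap.apply_eq_dotProduct {ι : Type*} [Fintype ι] [DecidableEq ι]
    (L : (ι → ℝ) →L[ℝ] ℝ) (v : ι → ℝ) : L v = v ⬝ᵥ fun i => L (Pi.single i 1) := by
  conv_lhs => rw [← Finset.univ_sum_single v]
  simp only [map_sum, dotProduct]
  refine Finset.sum_congr rfl fun i _ => ?_
  rw [← smul_eq_mul, ← L.map_smul, ← Pi.single_smul', smul_eq_mul, mul_one]

theorem newton_step_dotProduct {K ι : Type*} [Field K] [CharZero K] [Fintype ι] [DecidableEq ι]
    {B : Matrix ι ι K} (hB : IsUnit B.det) (g : ι → K) :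
    -(B⁻¹ *ᵥ g) ⬝ᵥ g + -(B⁻¹ *ᵥ g) ⬝ᵥ B *ᵥ -(B⁻¹ *ᵥ g) / 2 = -(g ⬝ᵥ B⁻¹ *ᵥ g) / 2 := by
  rw [mulVec_neg, mulVec_mulVec, mul_nonsing_inv B hB, one_mulVec]
  simp only [neg_dotProduct, dotProduct_neg, neg_neg, dotProduct_comm (B⁻¹ *ᵥ g)]
  ring

theorem isUnit_det_of_posDef_neg {K ι : Type*} [Field K] [PartialOrder K] [StarRing K]
    [Fintype ι] [DecidableEq ι] {B : Matrix ι ι K} (hB : (-B).PosDef) : IsUnit B.det := by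
  simpa [isUnit_iff_isUnit_det] using hB.isUnit.neg

theorem dotProduct_inv_mulVec_neg {ι : Type*} [Fintype ι] [DecidableEq ι]
    {B : Matrix ι ι ℝ} (hB : (-B).PosDef) {x : ι → ℝ} (hx : x ≠ 0) :
    x ⬝ᵥ B⁻¹ *ᵥ x < 0 := by
  set y := B⁻¹ *ᵥ x
  have hBy : B *ᵥ y = x := by
    rw [mulVec_mulVec, mul_nonsing_inv B (isUnit_det_of_posDef_neg hB), one_mulVec]
  clear_value y
  subst hBy
  have hy : y ≠ 0 := by rintro rfl; exact hx (mulVec_zero B)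
  simpa [neg_mulVec, dotProduct_comm] using hB.dotProduct_mulVec_pos hy

open Matrix in
theorem stmt_16_general {n : ℕ} (f : (Fin n → ℝ) → ℝ) (hf : ContDiff ℝ 2 f)
    (B : Matrix (Fin n) (Fin n) ℝ) (hBnd : (-B).PosDef)
    (hLoe : ∀ (β v : Fin n → ℝ),
      v ⬝ᵥ B.mulVec v ≤ fderiv ℝ (fun x => fderiv ℝ f x v) β v) :
    ∀ β : Fin n → ℝ,
      f β ≤ f (β - B⁻¹.mulVec (fun i => fderiv ℝ f β (Pi.single i 1))) ∧
      (f (β - B⁻¹.mulVec (fun i => fderiv ℝ f β (Pi.single i 1))) = f β →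
        (fun i => fderiv ℝ f β (Pi.single i 1)) = 0) := by
  intro β
  set g : Fin n → ℝ := fun i => fderiv ℝ f β (Pi.single i 1)
  have hminorant := add_fderiv_add_half_le_of_le_fderiv_fderiv hf β (-(B⁻¹ *ᵥ g))
    (hLoe · (-(B⁻¹ *ᵥ g)))
  rw [(fderiv ℝ f β).apply_eq_dotProduct, add_assoc,
    newton_step_dotProduct (isUnit_det_of_posDef_neg hBnd), ← sub_eq_add_neg] at hminorant
  have hq : g ≠ 0 → g ⬝ᵥ B⁻¹ *ᵥ g < 0 := dotProduct_inv_mulVec_neg hBnd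
  refine ⟨?_, fun heq => ?_⟩
  · rcases eq_or_ne g 0 with hg | hg
    · simp [hg]
    · linarith [hq hg]
  · by_contra hg
    linarith [hq hg]

open Matrix in
theorem stmt_16 {n : ℕ} (f : (Fin n → ℝ) → ℝ) (hf : ContDiff ℝ 2 f)
    (hconc : ConcaveOn ℝ Set.univ f)
    (B : Matrix (Fin n) (Fin n) ℝ) (hBsymm : B.IsSymm) (hBnd : (-B).PosDef)
    (hLoe : ∀ (β v : Fin n → ℝ),
      v ⬝ᵥ B.mulVec v ≤ fderiv ℝ (fun x => fderiv ℝ f x v) β v) :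
    ∀ β : Fin n → ℝ,
      f β ≤ f (β - B⁻¹.mulVec (fun i => fderiv ℝ f β (Pi.single i 1))) ∧
      (f (β - B⁻¹.mulVec (fun i => fderiv ℝ f β (Pi.single i 1))) = f β →
        (fun i => fderiv ℝ f β (Pi.single i 1)) = 0) :=
  stmt_16_general f hf B hBnd hLoe
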